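/- Assume Cone(N,N) = C, i.e., for every object X of C there exists a distinguished triangle N' ⟶ N₀ ⟶ X ⟶ N'⟦1⟧ with N₀, N' ∈ N. Then for any distinguished triangle A ⟶f B ⟶g C ⟶h A⟦1⟧ whose connecting morphism h satisfies both condition (Lex) and condition (Rex), the morphism h factors through an object of N, and the shifted morphism h⟦-1⟧: C⟦-1⟧ ⟶ A also factors through an object of N. -/

import Mathlib

open CategoryTheory CategoryTheory.Limits CategoryTheory.Pretriangulated

universe v u v₂ u₂

variable {C : Type u} [Category.{v} C] [Preadditive C] [HasZeroObject C]
  [HasShift C ℤ] [∀ n : ℤ, (shiftFunctor C n).Additive] [Pretriangulated C]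

/-- `f : X ⟶ Y` factors through an object of `N`. -/
def FactorsThru (N : Set C) {X Y : C} (f : X ⟶ Y) : Prop :=
  ∃ (Z : C) (_ : Z ∈ N) (u : X ⟶ Z) (v : Z ⟶ Y), f = u ≫ v

/-- The morphism `X⟦-1⟧ ⟶ A` obtained from `h : X ⟶ A⟦1⟧` by shifting by `-1` and
composing with the canonical isomorphism `A⟦1⟧⟦-1⟧ ≅ A`. -/
noncomputable def descShift {X A : C} (h : X ⟶ A⟦(1:ℤ)⟧) : X⟦(-1:ℤ)⟧ ⟶ A :=
  h⟦(-1:ℤ)⟧' ≫ (shiftEquiv C (1:ℤ)).unitIso.inv.app A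

/-- The class `S_N` of morphisms fitting in a distinguished triangle whose two other
maps factor through `N`. -/
def SN (N : Set C) {B C₀ : C} (g : B ⟶ C₀) : Prop :=
  ∃ (A : C) (f : A ⟶ B) (h : C₀ ⟶ A⟦(1:ℤ)⟧),
    (Triangle.mk f g h ∈ distTriang C) ∧ FactorsThru N f ∧ FactorsThru N h

/-- The class `L`. -/
def ClassL (N : Set C) {A B : C} (f : A ⟶ B) : Prop :=
  ∃ (N₀ : C) (_ : N₀ ∈ N) (g : B ⟶ N₀) (h : N₀ ⟶ A⟦(1:ℤ)⟧),
    (Triangle.mk f g h ∈ distTriang C) ∧ FactorsThru N (descShift h)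

/-- The class `R`. -/
def ClassR (N : Set C) {B C₀ : C} (g : B ⟶ C₀) : Prop :=
  ∃ (N₀ : C) (_ : N₀ ∈ N) (f : N₀ ⟶ B) (h : C₀ ⟶ N₀⟦(1:ℤ)⟧),
    (Triangle.mk f g h ∈ distTriang C) ∧ FactorsThru N h

/-- Condition (Lex) on a morphism `h : C₀ ⟶ A⟦1⟧`. -/
def LexCond (N : Set C) {C₀ A : C} (h : C₀ ⟶ A⟦(1:ℤ)⟧) : Prop :=
  ∀ (N₀ : C), N₀ ∈ N → ∀ (x : N₀ ⟶ C₀), FactorsThru N (descShift (x ≫ h))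

/-- Condition (Rex) on a morphism `h : C₀ ⟶ A⟦1⟧`. -/
def RexCond (N : Set C) {C₀ A : C} (h : C₀ ⟶ A⟦(1:ℤ)⟧) : Prop :=
  ∀ (N₀ : C), N₀ ∈ N → ∀ (y : A ⟶ N₀),
    ∃ (M : C) (_ : M ∈ N) (u : C₀⟦(-1:ℤ)⟧ ⟶ M⟦(-1:ℤ)⟧) (v : M⟦(-1:ℤ)⟧ ⟶ N₀),
      descShift h ≫ y = u ≫ v

/-- `S_N` as a morphism property. -/
def SNProp (N : Set C) : MorphismProperty C := fun _ _ g => SN N g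


/-!
By `Cone(N,N) = C` there is a triangle `K' ⟶ K₀ ⟶ A⟦1⟧ ⟶ K'⟦1⟧` with `K', K₀ ∈ N`. Its last map
is `y⟦1⟧` for some `y : A ⟶ K'`, and (Rex) for `y` says, after shifting back, that `h ≫ y⟦1⟧`
factors through `N`. A morphism into the middle term of a triangle with first term in `N`
factors through `N` as soon as its composite with the second map does: it is the sum of a
morphism through the first term and one through an extension of two objects of `N`. Hence `h`
factors through `N`. Dually, a triangle `L' ⟶ L₀ ⟶ C₀ ⟶ L'⟦1⟧` with `L', L₀ ∈ N`, shifted by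
`-1`, together with (Lex) shows that `h⟦-1⟧` factors through `N`.
-/

set_option linter.unusedSectionVars false

section

variable {N : Set C}

lemma FactorsThru.neg {X Y : C} {f : X ⟶ Y} (hf : FactorsThru N f) : FactorsThru N (-f) := by
  obtain ⟨W, hW, u, v, rfl⟩ := hf
  exact ⟨W, hW, -u, v, (Preadditive.neg_comp _ _).symm⟩

lemma FactorsThru.add (hNext : ∀ T ∈ distTriang C, T.obj₁ ∈ N → T.obj₃ ∈ N → T.obj₂ ∈ N)
    {X Y : C} {f₁ f₂ : X ⟶ Y} (h₁ : FactorsThru N f₁) (h₂ : FactorsThru N f₂) :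
    FactorsThru N (f₁ + f₂) := by
  obtain ⟨Z₁, hZ₁, u₁, v₁, rfl⟩ := h₁
  obtain ⟨Z₂, hZ₂, u₂, v₂, rfl⟩ := h₂
  exact ⟨Z₁ ⊞ Z₂, hNext _ (binaryBiproductTriangle_distinguished Z₁ Z₂) hZ₁ hZ₂,
    biprod.lift u₁ u₂, biprod.desc v₁ v₂, by simp⟩

lemma FactorsThru.of_comp_mor₂
    (hNext : ∀ T ∈ distTriang C, T.obj₁ ∈ N → T.obj₃ ∈ N → T.obj₂ ∈ N)
    (T : Triangle C) (hT : T ∈ distTriang C) (hT₁ : T.obj₁ ∈ N)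
    {Y : C} {φ : Y ⟶ T.obj₂} (hφ : FactorsThru N (φ ≫ T.mor₂)) : FactorsThru N φ := by
  obtain ⟨Z, hZ, s, t, hst⟩ := hφ
  obtain ⟨F, a, b, hF⟩ := distinguished_cocone_triangle₂ (t ≫ T.mor₃)
  obtain ⟨r, hr⟩ : ∃ r : F ⟶ T.obj₂, b ≫ t = r ≫ T.mor₂ :=
    T.coyoneda_exact₃ hT (b ≫ t) (by rw [Category.assoc]; exact comp_distTriang_mor_zero₂₃ _ hF)
  obtain ⟨σ, hσ⟩ : ∃ σ : Y ⟶ F, s = σ ≫ b :=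
    Triangle.coyoneda_exact₃ _ hF s (show s ≫ t ≫ T.mor₃ = 0 by
      rw [← Category.assoc, ← hst, Category.assoc, comp_distTriang_mor_zero₂₃ _ hT, comp_zero])
  obtain ⟨e, he⟩ : ∃ e : Y ⟶ T.obj₁, φ - σ ≫ r = e ≫ T.mor₁ :=
    T.coyoneda_exact₂ hT (φ - σ ≫ r) (by simp [hst, hσ, hr])
  rw [← sub_add_cancel φ (σ ≫ r), he]
  exact FactorsThru.add hNext ⟨T.obj₁, hT₁, e, T.mor₁, rfl⟩ ⟨F, hNext _ hF hT₁ hZ, σ, r, rfl⟩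

lemma FactorsThru.of_mor₂_comp
    (hNext : ∀ T ∈ distTriang C, T.obj₁ ∈ N → T.obj₃ ∈ N → T.obj₂ ∈ N)
    (T : Triangle C) (hT : T ∈ distTriang C) (hT₁ : T.obj₁⟦(1:ℤ)⟧ ∈ N)
    {Y : C} {ψ : T.obj₃ ⟶ Y} (hψ : FactorsThru N (T.mor₂ ≫ ψ)) : FactorsThru N ψ := by
  obtain ⟨Z, hZ, s, t, hst⟩ := hψ
  obtain ⟨E, j, k, hE⟩ := distinguished_cocone_triangle (T.mor₁ ≫ s)
  obtain ⟨χ, hχ⟩ : ∃ χ : T.obj₃ ⟶ E, s ≫ j = T.mor₂ ≫ χ :=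
    T.yoneda_exact₂ hT (s ≫ j) (by rw [← Category.assoc]; exact comp_distTriang_mor_zero₁₂ _ hE)
  obtain ⟨ρ, hρ⟩ : ∃ ρ : E ⟶ Y, t = j ≫ ρ :=
    Triangle.yoneda_exact₂ _ hE t (show (T.mor₁ ≫ s) ≫ t = 0 by
      rw [Category.assoc, ← hst, ← Category.assoc, comp_distTriang_mor_zero₁₂ _ hT, zero_comp])
  obtain ⟨e, he⟩ : ∃ e : T.obj₁⟦(1:ℤ)⟧ ⟶ Y, ψ - χ ≫ ρ = T.mor₃ ≫ e :=
    T.yoneda_exact₃ hT (ψ - χ ≫ ρ) (by simp [hst, hρ, reassoc_of% hχ])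
  rw [← sub_add_cancel ψ (χ ≫ ρ), he]
  exact FactorsThru.add hNext ⟨_, hT₁, T.mor₃, e, rfl⟩
    ⟨E, hNext _ (rot_of_distTriang _ hE) hZ hT₁, χ, ρ, rfl⟩

lemma FactorsThru.of_shift_mor₂_comp
    (hNiso : ∀ ⦃X Y : C⦄, (X ≅ Y) → X ∈ N → Y ∈ N)
    (hNext : ∀ T ∈ distTriang C, T.obj₁ ∈ N → T.obj₃ ∈ N → T.obj₂ ∈ N)
    (T : Triangle C) (hT : T ∈ distTriang C) (hT₁ : T.obj₁ ∈ N) {Y : C}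
    {ψ : T.obj₃⟦(-1:ℤ)⟧ ⟶ Y} (hψ : FactorsThru N (T.mor₂⟦(-1:ℤ)⟧' ≫ ψ)) :
    FactorsThru N ψ := by
  refine FactorsThru.of_mor₂_comp hNext _ (T.shift_distinguished hT (-1))
    (hNiso (shiftNegShift T.obj₁ (1:ℤ)).symm hT₁) ?_
  have hmor₂ : ((shiftFunctor (Triangle C) (-1:ℤ)).obj T).mor₂ ≫ ψ = -(T.mor₂⟦(-1:ℤ)⟧' ≫ ψ) := by
    change ((-1 : ℤ).negOnePow • T.mor₂⟦(-1:ℤ)⟧') ≫ ψ = _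
    rw [Int.negOnePow_neg, Int.negOnePow_one, Units.neg_smul, one_smul, Preadditive.neg_comp]
  rw [hmor₂]
  exact hψ.neg

lemma descShift_comp {X Y A : C} (x : X ⟶ Y) (h : Y ⟶ A⟦(1:ℤ)⟧) :
    descShift (x ≫ h) = x⟦(-1:ℤ)⟧' ≫ descShift h := by
  simp [descShift]

lemma FactorsThru.comp_shift_of_descShift_comp
    (hNiso : ∀ ⦃X Y : C⦄, (X ≅ Y) → X ∈ N → Y ∈ N) {X A K M : C} (hM : M ∈ N)
    {h : X ⟶ A⟦(1:ℤ)⟧} {y : A ⟶ K} (u : X⟦(-1:ℤ)⟧ ⟶ M⟦(-1:ℤ)⟧) (v : M⟦(-1:ℤ)⟧ ⟶ K)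
    (huv : descShift h ≫ y = u ≫ v) : FactorsThru N (h ≫ y⟦(1:ℤ)⟧') := by
  -- `descShift h` is definitionally `(adj.homEquiv _ _).symm h`.
  let adj : shiftFunctor C (-1:ℤ) ⊣ shiftFunctor C (1:ℤ) := (shiftEquiv C (1:ℤ)).symm.toAdjunction
  have hh : adj.homEquiv _ _ (descShift h) = h := (adj.homEquiv _ _).apply_symm_apply h
  refine ⟨M⟦(-1:ℤ)⟧⟦(1:ℤ)⟧, hNiso (shiftNegShift M (1:ℤ)).symm hM, adj.homEquiv _ _ u,
    v⟦(1:ℤ)⟧', ?_⟩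
  calc h ≫ y⟦(1:ℤ)⟧' = adj.homEquiv _ _ (descShift h) ≫ y⟦(1:ℤ)⟧' := by rw [hh]
    _ = adj.homEquiv _ _ (descShift h ≫ y) := (adj.homEquiv_naturality_right _ _).symm
    _ = adj.homEquiv _ _ (u ≫ v) := by rw [huv]
    _ = adj.homEquiv _ _ u ≫ v⟦(1:ℤ)⟧' := adj.homEquiv_naturality_right _ _

end

theorem stmt18_general (N : Set C)
    (hNiso : ∀ ⦃X Y : C⦄, (X ≅ Y) → X ∈ N → Y ∈ N)
    (hNext : ∀ (T : Triangle C), (T ∈ distTriang C) → T.obj₁ ∈ N → T.obj₃ ∈ N → T.obj₂ ∈ N)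
    (hCone : ∀ X : C, ∃ (N' N₀ : C) (_ : N' ∈ N) (_ : N₀ ∈ N)
      (u : N' ⟶ N₀) (v : N₀ ⟶ X) (w : X ⟶ N'⟦(1:ℤ)⟧),
        Triangle.mk u v w ∈ distTriang C)
    {A C₀ : C} (h : C₀ ⟶ A⟦(1:ℤ)⟧)
    (hLex : LexCond N h) (hRex : RexCond N h) :
    FactorsThru N h ∧ FactorsThru N (descShift h) := by
  constructor
  · obtain ⟨K', K₀, hK', hK₀, _, _, w₀, hK⟩ := hCone (A⟦(1:ℤ)⟧)
    obtain ⟨y, rfl⟩ := (shiftFunctor C (1:ℤ)).map_surjective w₀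
    obtain ⟨M, hM, u, v, huv⟩ := hRex K' hK' y
    exact FactorsThru.of_comp_mor₂ hNext _ (rot_of_distTriang _ hK) hK₀
      (FactorsThru.comp_shift_of_descShift_comp hNiso hM u v huv)
  · obtain ⟨L', L₀, hL', hL₀, _, x, _, hL⟩ := hCone C₀
    refine FactorsThru.of_shift_mor₂_comp hNiso hNext _ hL hL' ?_
    have hx := hLex L₀ hL₀ x
    rwa [descShift_comp] at hx

theorem stmt18 (N : Set C)
    (hN0 : ∀ X : C, Limits.IsZero X → X ∈ N)
    (hNiso : ∀ ⦃X Y : C⦄, (X ≅ Y) → X ∈ N → Y ∈ N)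
    (hNsum : ∀ ⦃X Z : C⦄ (i : X ⟶ Z) (r : Z ⟶ X), i ≫ r = 𝟙 X → Z ∈ N → X ∈ N)
    (hNext : ∀ (T : Triangle C), (T ∈ distTriang C) → T.obj₁ ∈ N → T.obj₃ ∈ N → T.obj₂ ∈ N)
    (hCone : ∀ X : C, ∃ (N' N₀ : C) (_ : N' ∈ N) (_ : N₀ ∈ N)
      (u : N' ⟶ N₀) (v : N₀ ⟶ X) (w : X ⟶ N'⟦(1:ℤ)⟧),
        Triangle.mk u v w ∈ distTriang C)
    {A B C₀ : C} (f : A ⟶ B) (g : B ⟶ C₀) (h : C₀ ⟶ A⟦(1:ℤ)⟧)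
    (hT : Triangle.mk f g h ∈ distTriang C)
    (hLex : LexCond N h) (hRex : RexCond N h) :
    FactorsThru N h ∧ FactorsThru N (descShift h) :=
  stmt18_general N hNiso hNext hCone h hLex hRex
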